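/- Assume the rank DU has the extension property, i.e., for every partial type p(x) over a set A there exists a complete type q(x) ∈ S(A) with p ⊆ q and DU(p) = DU(q). Then for every complete type p, DU(p) = SU^d(p). -/

import Mathlib

open FirstOrder Cardinal Set

namespace DivRank

/-- A formula with free variables indexed by `α` together with a tuple of parameters from `M`. -/
structure ParamFormula (L : FirstOrder.Language.{0,0}) (M : Type) (α : Type) : Type where
  n : ℕ
  fml : L.Formula (α ⊕ Fin n)
  par : Fin n → M

/-- A partial type (in variables `α`) with parameters: a set of formulas with parameters. -/
abbrev PartialType (L : FirstOrder.Language.{0,0}) (M : Type) (α : Type) : Type :=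
  Set (ParamFormula L M α)

section Basic

variable {L : FirstOrder.Language.{0,0}} {M : Type} [L.Structure M] {α β : Type}

/-- Satisfaction of a parametrized formula by a tuple. -/
def ParamFormula.Realize (φ : ParamFormula L M α) (a : α → M) : Prop :=
  φ.fml.Realize (Sum.elim a φ.par)

/-- The formula `φ` has all its parameters in `A`. -/
def ParamFormula.over (φ : ParamFormula L M α) (A : Set M) : Prop :=
  Set.range φ.par ⊆ A

/-- Negation of a parametrized formula. -/
def ParamFormula.not (φ : ParamFormula L M α) : ParamFormula L M α :=
  ⟨φ.n, φ.fml.not, φ.par⟩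

/-- Relabelling of the free variables of a parametrized formula. -/
def ParamFormula.relabel (g : α → β) (φ : ParamFormula L M α) : ParamFormula L M β :=
  ⟨φ.n, φ.fml.relabel (Sum.map g id), φ.par⟩

/-- Applying a map `M → M` to the parameters of a formula. -/
def ParamFormula.mapPar (g : M → M) (φ : ParamFormula L M α) : ParamFormula L M α :=
  ⟨φ.n, φ.fml, g ∘ φ.par⟩

/-- The image of a partial type under a map of the monster model. -/
def mapType (g : M → M) (p : PartialType L M α) : PartialType L M α :=
  ParamFormula.mapPar g '' p

/-- `a` realizes the partial type `p`. -/
def Realizes (a : α → M) (p : PartialType L M α) : Prop :=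
  ∀ φ ∈ p, φ.Realize a

/-- The partial type `p` has all its parameters in `A`. -/
def IsOver (p : PartialType L M α) (A : Set M) : Prop :=
  ∀ φ ∈ p, φ.over A

/-- The set of parameters appearing in `p`. -/
def dom (p : PartialType L M α) : Set M :=
  ⋃ φ ∈ p, Set.range (ParamFormula.par φ)

/-- Consistency (= finite satisfiability in the monster model) of a set of formulas. -/
def Consistent (p : PartialType L M α) : Prop :=
  ∀ s : Finset (ParamFormula L M α), ↑s ⊆ p → ∃ a : α → M, ∀ φ ∈ s, φ.Realize a

/-- `p ⊢ φ` : finitely many formulas of `p` imply `φ` (in the monster model). -/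
def Entails (p : PartialType L M α) (φ : ParamFormula L M α) : Prop :=
  ∃ s : Finset (ParamFormula L M α), ↑s ⊆ p ∧
    ∀ a : α → M, (∀ ψ ∈ s, ψ.Realize a) → φ.Realize a

end Basic

/-- Two tuples have the same type over `A`. -/
def EqTypeOver (L : FirstOrder.Language.{0,0}) {M : Type} [L.Structure M] (A : Set M) {n : ℕ}
    (b b' : Fin n → M) : Prop :=
  ∀ ψ : ParamFormula L M (Fin n), ψ.over A → (ψ.Realize b ↔ ψ.Realize b')

/-- The complete type of the tuple `a` over the parameter set `B`. -/
def typeOf (L : FirstOrder.Language.{0,0}) {M : Type} [L.Structure M] {α : Type}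
    (a : α → M) (B : Set M) : PartialType L M α :=
  {φ | φ.over B ∧ φ.Realize a}

/-- `(as i : i < ω)` is an indiscernible sequence of `n`-tuples over `A`. -/
def IndiscernibleOver (L : FirstOrder.Language.{0,0}) {M : Type} [L.Structure M] (A : Set M) {n : ℕ}
    (as : ℕ → Fin n → M) : Prop :=
  ∀ (l : ℕ) (i j : Fin l → ℕ), StrictMono i → StrictMono j →
    ∀ ψ : ParamFormula L M (Fin l × Fin n), ψ.over A →
      (ψ.Realize (fun q => as (i q.1) q.2) ↔ ψ.Realize (fun q => as (j q.1) q.2))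

section Div

variable {L : FirstOrder.Language.{0,0}} {M : Type} [L.Structure M] {α : Type}

/-- The partial type `p` divides over `A`. -/
def Divides (p : PartialType L M α) (A : Set M) : Prop :=
  ∃ (n : ℕ) (φ : L.Formula (α ⊕ Fin n)) (b : Fin n → M),
    Entails p ⟨n, φ, b⟩ ∧
    ∃ k : ℕ, 2 ≤ k ∧ ∃ bs : ℕ → Fin n → M,
      (∀ i : ℕ, EqTypeOver L A (bs i) b) ∧
      ∀ S : Finset ℕ, S.card = k →
        ¬ ∃ a : α → M, ∀ i ∈ S, φ.Realize (Sum.elim a (bs i))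

/-- The partial type `p` forks over `A` : it implies a finite disjunction of formulas,
each of which divides over `A`. -/
def Forks (p : PartialType L M α) (A : Set M) : Prop :=
  ∃ (m : ℕ) (ψ : Fin m → ParamFormula L M α),
    (∀ j, Divides {ψ j} A) ∧
    ∃ s : Finset (ParamFormula L M α), ↑s ⊆ p ∧
      ∀ a : α → M, (∀ χ ∈ s, χ.Realize a) → ∃ j, (ψ j).Realize a

/-- `p` is a complete type over `A`. -/
def IsCompleteOver (p : PartialType L M α) (A : Set M) : Prop :=
  Consistent p ∧ IsOver p A ∧
    ∀ φ : ParamFormula L M α, φ.over A → (φ ∈ p ∨ φ.not ∈ p)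

/-- The partial type `p` over `A` is supersimple: every realization, over every `B ⊇ A`,
has its type over `B` non-dividing over `A ∪ B₀` for some finite `B₀ ⊆ B`. -/
def Supersimple (p : PartialType L M α) (A : Set M) : Prop :=
  ∀ B : Set M, A ⊆ B → ∀ a : α → M, Realizes a p →
    ∃ B₀ : Set M, B₀ ⊆ B ∧ B₀.Finite ∧ ¬ Divides (typeOf L a B) (A ∪ B₀)

end Div

/-- The cardinality `|T|` of the theory: `|L| + ℵ₀`. -/
def theoryCard (L : FirstOrder.Language.{0,0}) : Cardinal.{0} :=
  L.card + ℵ₀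

section Div2

variable {L : FirstOrder.Language.{0,0}} {M : Type} [L.Structure M] {α : Type}

/-- The partial type `p` over `A` is simple. -/
def SimpleType (p : PartialType L M α) (A : Set M) : Prop :=
  ∀ B : Set M, A ⊆ B → ∀ a : α → M, Realizes a p →
    ∃ B₀ : Set M, B₀ ⊆ B ∧ #↥B₀ ≤ theoryCard L ∧ ¬ Divides (typeOf L a B) (A ∪ B₀)

end Div2

/-- The theory (of the monster model `M`) is extensible: no complete type forks over
its own parameter set. -/
def Extensible (L : FirstOrder.Language.{0,0}) (M : Type) [L.Structure M] : Prop :=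
  ∀ (α : Type) (p : PartialType L M α) (A : Set M), IsCompleteOver p A → ¬ Forks p A

/-- `M` is a monster model with respect to the cardinal `κ`: it is `κ`-saturated and
strongly `κ`-homogeneous, and all "small" sets have size `< κ`. -/
structure IsMonster (L : FirstOrder.Language.{0,0}) (M : Type) [L.Structure M] (κ : Cardinal.{0}) :
    Prop where
  nonempty : Nonempty M
  big : κ ≤ #M
  saturated : ∀ (α : Type) (p : PartialType L M α) (A : Set M),
    #α < κ → #↥A < κ → IsOver p A → Consistent p → ∃ a : α → M, Realizes a p
  homogeneous : ∀ (A : Set M) (f : M → M), #↥A < κ →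
    (∀ (n : ℕ) (φ : L.Formula (Fin n)) (c : Fin n → M),
      Set.range c ⊆ A → (φ.Realize c ↔ φ.Realize (f ∘ c))) →
    ∃ g : M ≃[L] M, ∀ x ∈ A, g x = f x

/-- The foundation rank of a binary relation: `RankGE R o x` means the rank of `x` is `≥ o`. -/
def RankGE {X : Type*} (R : X → X → Prop) (o : Ordinal.{0}) (x : X) : Prop :=
  ∀ β < o, ∃ y, R x y ∧ RankGE R β y
termination_by o

section Ranks

variable {L : FirstOrder.Language.{0,0}} {M : Type} [L.Structure M] {α : Type}

/-- The relation whose foundation rank is `DU`: `(p,A) R (q,B)` iff `q` is a partial type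
over `B` extending `p` and dividing over `A`. -/
def DURel : (PartialType L M α × Set M) → (PartialType L M α × Set M) → Prop :=
  fun x y => Consistent y.1 ∧ IsOver y.1 y.2 ∧ x.1 ⊆ y.1 ∧ Divides y.1 x.2

/-- The relation whose foundation rank is `DU^f` (forking version). -/
def DUfRel : (PartialType L M α × Set M) → (PartialType L M α × Set M) → Prop :=
  fun x y => Consistent y.1 ∧ IsOver y.1 y.2 ∧ x.1 ⊆ y.1 ∧ Forks y.1 x.2

/-- The relation whose foundation rank is `SU^d`: dividing extension of complete types. -/
def SUdRel : (PartialType L M α × Set M) → (PartialType L M α × Set M) → Prop :=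
  fun x y => IsCompleteOver y.1 y.2 ∧ x.1 ⊆ y.1 ∧ Divides y.1 x.2

/-- The relation whose foundation rank is `SU^f`: forking extension of complete types. -/
def SUfRel : (PartialType L M α × Set M) → (PartialType L M α × Set M) → Prop :=
  fun x y => IsCompleteOver y.1 y.2 ∧ x.1 ⊆ y.1 ∧ Forks y.1 x.2

/-- The relation whose foundation rank is `D`: `(φ,A) R (ψ,B)` iff `⊨ ψ → φ` and `ψ`
divides over `A`. -/
def DRel : (ParamFormula L M α × Set M) → (ParamFormula L M α × Set M) → Prop :=
  fun x y => (y.1).over y.2 ∧ (∀ a : α → M, (y.1).Realize a → (x.1).Realize a) ∧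
    Divides {y.1} x.2

/-- The relation whose foundation rank is `D^f` (forking version). -/
def DfRel : (ParamFormula L M α × Set M) → (ParamFormula L M α × Set M) → Prop :=
  fun x y => (y.1).over y.2 ∧ (∀ a : α → M, (y.1).Realize a → (x.1).Realize a) ∧
    Forks {y.1} x.2

/-- `DU(p,A) ≥ o`. -/
def DUge (p : PartialType L M α) (A : Set M) (o : Ordinal.{0}) : Prop :=
  RankGE DURel o (p, A)

/-- `DU^f(p,A) ≥ o`. -/
def DUfge (p : PartialType L M α) (A : Set M) (o : Ordinal.{0}) : Prop :=
  RankGE DUfRel o (p, A)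

/-- `SU^d(p) ≥ o` for `p ∈ S(A)`. -/
def SUdge (p : PartialType L M α) (A : Set M) (o : Ordinal.{0}) : Prop :=
  RankGE SUdRel o (p, A)

/-- `SU^f(p) ≥ o` for `p ∈ S(A)`. -/
def SUfge (p : PartialType L M α) (A : Set M) (o : Ordinal.{0}) : Prop :=
  RankGE SUfRel o (p, A)

/-- `D(φ,A) ≥ o`. -/
def Dge (φ : ParamFormula L M α) (A : Set M) (o : Ordinal.{0}) : Prop :=
  RankGE DRel o (φ, A)

/-- `D^f(φ,A) ≥ o`. -/
def Dfge (φ : ParamFormula L M α) (A : Set M) (o : Ordinal.{0}) : Prop :=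
  RankGE DfRel o (φ, A)

/-- There is a dividing chain of partial types of depth `β` in `p` (over `A`). -/
def HasDividingChain (p : PartialType L M α) (A : Set M) (β : Ordinal.{0}) : Prop :=
  ∃ (P : Ordinal.{0} → PartialType L M α) (B : Ordinal.{0} → Set M),
    (∀ i < β, Consistent (P i) ∧ IsOver (P i) (B i)) ∧
    (0 < β → p ⊆ P 0 ∧ A ⊆ B 0 ∧ Divides (P 0) A) ∧
    ∀ i, 0 < i → i < β →
      (∀ j < i, P j ⊆ P i ∧ B j ⊆ B i) ∧ Divides (P i) (⋃ j < i, B j)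

end Ranks


/-- Valid paths in the tree `T_{γ,lam}`: a path is a list of steps, each step descending
either to a copy of `T_β` when `γ = β + 1` (with the copy indexed by `lam`), or to the
subtree `T_β`, `β < γ`, when `γ` is a limit ordinal. -/
def TreeValid (lam : Type) : Ordinal.{0} → List (Ordinal.{0} × Option lam) → Prop
  | _, [] => True
  | γ, (β, some _) :: l => γ = β + 1 ∧ TreeValid lam β l
  | γ, (β, none) :: l => Order.IsSuccLimit γ ∧ β < γ ∧ TreeValid lam β l

/-- The ordinal indexing the subtree at the end of a path starting from `γ`. -/
def treeAfter {lam : Type} : Ordinal.{0} → List (Ordinal.{0} × Option lam) → Ordinal.{0}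
  | γ, [] => γ
  | _, (β, _) :: l => treeAfter β l


theorem rankGE_iff {X : Type*} (R : X → X → Prop) (o : Ordinal.{0}) (x : X) :
    RankGE R o x ↔ ∀ β < o, ∃ y, R x y ∧ RankGE R β y := by
  rw [RankGE]

theorem rankGE_mono {X : Type*} {R S : X → X → Prop} (h : ∀ x y, R x y → S x y) :
    ∀ o : Ordinal.{0}, ∀ x, RankGE R o x → RankGE S o x := by
  intro o
  induction o using Ordinal.induction with
  | h o ih =>
    intro x hx
    rw [rankGE_iff] at hx ⊢
    intro β hβ
    obtain ⟨y, hRy, hy⟩ := hx β hβ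
    exact ⟨y, h x y hRy, ih β hβ y hy⟩

theorem divides_mono {L : FirstOrder.Language.{0,0}} {M : Type} [L.Structure M] {α : Type}
    {p q : PartialType L M α} (hpq : p ⊆ q) {A : Set M} (h : Divides p A) : Divides q A := by
  obtain ⟨n, φ, b, ⟨s, hs, hent⟩, rest⟩ := h
  exact ⟨n, φ, b, ⟨s, hs.trans hpq, hent⟩, rest⟩

/-- if `DU` has the extension property, then `DU = SU^d` on complete types. -/
theorem DU_eq_SUd_of_extension {L : FirstOrder.Language.{0,0}} {M : Type} [L.Structure M] {κ : Cardinal}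
    (hM : IsMonster L M κ) {m : ℕ}
    (hext : ∀ (q : PartialType L M (Fin m)) (B : Set M), IsOver q B → Consistent q →
      ∃ r : PartialType L M (Fin m), IsCompleteOver r B ∧ q ⊆ r ∧
        ∀ o : Ordinal, DUge q B o ↔ DUge r B o)
    (p : PartialType L M (Fin m)) (A : Set M) (hA : #↥A < κ)
    (hcomp : IsCompleteOver p A) :
    ∀ o : Ordinal, DUge p A o ↔ SUdge p A o := by
  have main : ∀ o : Ordinal, ∀ (p : PartialType L M (Fin m)) (A : Set M),
      IsCompleteOver p A → DUge p A o → SUdge p A o := by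
    intro o
    induction o using Ordinal.induction with
    | h o ih =>
      intro p A hcomp hdu
      rw [SUdge, rankGE_iff]
      intro β hβ
      rw [DUge, rankGE_iff] at hdu
      obtain ⟨⟨q, B⟩, ⟨hqcons, hqover, hpq, hdiv⟩, hrk⟩ := hdu β hβ
      obtain ⟨r, hrcomp, hqr, hiff⟩ := hext q B hqover hqcons
      have hrdu : DUge r B β := (hiff β).mp hrk
      refine ⟨(r, B), ⟨hrcomp, hpq.trans hqr, divides_mono hqr hdiv⟩, ?_⟩
      exact ih β hβ r B hrcomp hrdu
  intro o
  constructor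
  · exact main o p A hcomp
  · exact rankGE_mono (fun x y ⟨hc, hsub, hdiv⟩ => ⟨hc.1, hc.2.1, hsub, hdiv⟩) o (p, A)

end DivRank
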